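/- arXiv:2204.03235 — 8 statements merged into one kernel-verified Lean document; each statement's English description precedes it below -/
import Mathlib

section
/- For every S > 0, c > 0 and a ∈ ℝ, one has 2c + √(S²/c² + (a−c)²) + √(S²/c² + (a+c)²) ≥ 6·√(S/√3), with equality if and only if a = 0 and c = √(S/√3). -/
/-!
With `w = √(S²/c² + c²)` the perimeter is `2 (c + w) + (u + v - 2w)`, where `u`, `v` are the two
slanted sides. Since `u²v² = (S²/c² + c² - a²)² + 4a²S²/c²`, comparing squares gives `u + v ≥ 2w`,
strictly unless `a = 0`: moving the apex over the midpoint of the base shortens the perimeter.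
Writing `S² = 3t⁴` with `t = √(S/√3)`, the inequality `c + w ≥ 3t` becomes after squaring
`3t (t - c)² (t + 2c) ≥ 0`, strictly unless `c = t`.
-/

open Real

lemma mul_add_sq_sub_add_sq_add (K a c : ℝ) :
    (K + (a - c) ^ 2) * (K + (a + c) ^ 2) = (K + c ^ 2 - a ^ 2) ^ 2 + 4 * a ^ 2 * K := by
  ring

lemma two_mul_sqrt_le_sqrt_add_sqrt {K : ℝ} (hK : 0 ≤ K) (a c : ℝ) :
    2 * √(K + c ^ 2) ≤ √(K + (a - c) ^ 2) + √(K + (a + c) ^ 2) := by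
  have hprod : K + c ^ 2 - a ^ 2 ≤ √(K + (a - c) ^ 2) * √(K + (a + c) ^ 2) := by
    rw [← sqrt_mul (by positivity), mul_add_sq_sub_add_sq_add]
    exact le_sqrt_of_sq_le (by nlinarith [sq_nonneg a])
  refine (pow_le_pow_iff_left₀ (by positivity) (by positivity) two_ne_zero).1 ?_
  rw [mul_pow, add_sq, sq_sqrt (by positivity), sq_sqrt (by positivity), sq_sqrt (by positivity)]
  linarith

lemma two_mul_sqrt_lt_sqrt_add_sqrt {K a : ℝ} (hK : 0 < K) (ha : a ≠ 0) (c : ℝ) :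
    2 * √(K + c ^ 2) < √(K + (a - c) ^ 2) + √(K + (a + c) ^ 2) := by
  have hprod : K + c ^ 2 - a ^ 2 < √(K + (a - c) ^ 2) * √(K + (a + c) ^ 2) := by
    rw [← sqrt_mul (by positivity), mul_add_sq_sub_add_sq_add]
    exact lt_sqrt_of_sq_lt (by nlinarith [mul_pos (sq_pos_of_ne_zero ha) hK])
  refine (pow_lt_pow_iff_left₀ (by positivity) (by positivity) two_ne_zero).1 ?_
  rw [mul_pow, add_sq, sq_sqrt (by positivity), sq_sqrt (by positivity), sq_sqrt (by positivity)]
  linarith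

lemma add_sq_div_sub_sub_sq {t c : ℝ} (hc : c ≠ 0) :
    3 * t ^ 4 / c ^ 2 + c ^ 2 - (3 * t - c) ^ 2 = 3 * t * (t - c) ^ 2 * (t + 2 * c) / c ^ 2 := by
  field_simp
  ring

lemma three_mul_le_add_sqrt {t c : ℝ} (ht : 0 ≤ t) (hc : 0 < c) :
    3 * t ≤ c + √(3 * t ^ 4 / c ^ 2 + c ^ 2) := by
  have : (3 * t - c) ^ 2 ≤ 3 * t ^ 4 / c ^ 2 + c ^ 2 := by
    rw [← sub_nonneg, add_sq_div_sub_sub_sq hc.ne']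
    positivity
  linarith [le_sqrt_of_sq_le this]

lemma three_mul_lt_add_sqrt {t c : ℝ} (ht : 0 < t) (hc : 0 < c) (hct : c ≠ t) :
    3 * t < c + √(3 * t ^ 4 / c ^ 2 + c ^ 2) := by
  have : (3 * t - c) ^ 2 < 3 * t ^ 4 / c ^ 2 + c ^ 2 := by
    rw [← sub_pos, add_sq_div_sub_sub_sq hc.ne']
    have := sub_ne_zero.2 hct.symm
    positivity
  linarith [lt_sqrt_of_sq_lt this]

lemma sq_eq_three_mul_sqrt_div_sqrt_three_pow_four {S : ℝ} (hS : 0 ≤ S) :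
    S ^ 2 = 3 * √(S / √3) ^ 4 := by
  rw [show 4 = 2 * 2 by rfl, pow_mul, sq_sqrt (by positivity), div_pow, sq_sqrt zero_le_three]
  ring

/-- Among triangles `Ω_{a,c}` of fixed area `S`, the equilateral one (`a = 0`,
`c = √(S/√3)`) uniquely minimises the perimeter. -/
theorem perimeter_triangle_ge (S c : ℝ) (a : ℝ) (hS : 0 < S) (hc : 0 < c) :
    2 * c + Real.sqrt (S ^ 2 / c ^ 2 + (a - c) ^ 2) +
        Real.sqrt (S ^ 2 / c ^ 2 + (a + c) ^ 2) ≥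
      6 * Real.sqrt (S / Real.sqrt 3) ∧
    (2 * c + Real.sqrt (S ^ 2 / c ^ 2 + (a - c) ^ 2) +
        Real.sqrt (S ^ 2 / c ^ 2 + (a + c) ^ 2) =
      6 * Real.sqrt (S / Real.sqrt 3) ↔ a = 0 ∧ c = Real.sqrt (S / Real.sqrt 3)) := by
  have hS2 := sq_eq_three_mul_sqrt_div_sqrt_three_pow_four hS.le
  have ht : 0 < √(S / √3) := by positivity
  generalize √(S / √3) = t at hS2 ht ⊢
  rw [hS2]
  have hK : 0 < 3 * t ^ 4 / c ^ 2 := by positivity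
  have hsides := two_mul_sqrt_le_sqrt_add_sqrt hK.le a c
  have hbase := three_mul_le_add_sqrt ht.le hc
  refine ⟨by linarith, ⟨fun h ↦ ⟨?_, ?_⟩, ?_⟩⟩
  · by_contra ha
    linarith [two_mul_sqrt_lt_sqrt_add_sqrt hK ha c]
  · by_contra hct
    linarith [three_mul_lt_add_sqrt ht hc hct]
  · rintro ⟨rfl, rfl⟩
    have hside : 3 * c ^ 4 / c ^ 2 + c ^ 2 = (2 * c) ^ 2 := by
      field_simp
      ring
    simp only [zero_sub, neg_sq, zero_add, hside, sqrt_sq (by positivity : 0 ≤ 2 * c)]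
    ring
end

section
/- The lowest Robin eigenvalue of the equilateral triangle is a strictly increasing function of the area, in the following explicit form: let α < 0, let 0 < S₁ < S₂, and let M₁, M₂ > 0 satisfy (Mᵢ + artanh(½ tanh Mᵢ))·tanh Mᵢ = −α·√(√3·Sᵢ) for i = 1, 2. Then M₁ < M₂ and consequently −4α²/tanh²(M₁) < −4α²/tanh²(M₂). -/
/-- The inverse hyperbolic tangent, `artanh x = ½ log((1+x)/(1-x))`. -/
noncomputable def artanh (x : ℝ) : ℝ := (1 / 2) * Real.log ((1 + x) / (1 - x))

lemma tanh_pos_aux {x : ℝ} (hx : 0 < x) : 0 < Real.tanh x := by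
  rw [Real.tanh_eq_sinh_div_cosh]
  exact div_pos (Real.sinh_pos_iff.2 hx) (Real.cosh_pos x)

lemma tanh_lt_one_aux (x : ℝ) : Real.tanh x < 1 := by
  rw [Real.tanh_eq_sinh_div_cosh, div_lt_one (Real.cosh_pos x)]
  nlinarith [Real.cosh_sub_sinh x, Real.exp_pos (-x)]

lemma tanh_strictMono : StrictMono Real.tanh := by
  intro a b hab
  rw [Real.tanh_eq_sinh_div_cosh, Real.tanh_eq_sinh_div_cosh,
    div_lt_div_iff₀ (Real.cosh_pos a) (Real.cosh_pos b)]
  have h : Real.sinh (a - b) < 0 := Real.sinh_neg_iff.2 (by linarith)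
  rw [Real.sinh_sub] at h
  linarith

lemma artanh_pos {x : ℝ} (h0 : 0 < x) (h1 : x < 1) : 0 < artanh x := by
  unfold artanh
  have : 1 < (1 + x) / (1 - x) := by
    rw [lt_div_iff₀ (by linarith)]; linarith
  have := Real.log_pos this
  linarith

lemma artanh_lt {x y : ℝ} (hx : 0 < x) (hxy : x < y) (hy : y < 1) :
    artanh x < artanh y := by
  unfold artanh
  have h : (1 + x) / (1 - x) < (1 + y) / (1 - y) := by
    rw [div_lt_div_iff₀ (by linarith) (by linarith)]; nlinarith
  have hpos : 0 < (1 + x) / (1 - x) := div_pos (by linarith) (by linarith)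
  have := Real.log_lt_log hpos h
  linarith

/-- The auxiliary strictly increasing function. -/
lemma f_strictMono {a b : ℝ} (ha : 0 < a) (hab : a < b) :
    (a + artanh ((1 / 2) * Real.tanh a)) * Real.tanh a <
    (b + artanh ((1 / 2) * Real.tanh b)) * Real.tanh b := by
  have hb : 0 < b := ha.trans hab
  have hta : 0 < Real.tanh a := tanh_pos_aux ha
  have htb : 0 < Real.tanh b := tanh_pos_aux hb
  have htab : Real.tanh a < Real.tanh b := tanh_strictMono hab
  have hb1 : Real.tanh b < 1 := tanh_lt_one_aux b
  have ha1 : Real.tanh a < 1 := htab.trans hb1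
  have hart : artanh ((1 / 2) * Real.tanh a) < artanh ((1 / 2) * Real.tanh b) :=
    artanh_lt (by linarith) (by linarith) (by linarith)
  have hpa : 0 < a + artanh ((1 / 2) * Real.tanh a) :=
    add_pos ha (artanh_pos (by linarith) (by linarith))
  exact mul_lt_mul (by linarith) htab.le hta (by linarith)

/-- The lowest Robin eigenvalue `−4α²/tanh²(M)` of the equilateral triangle is a strictly
increasing function of the area `S`, where `M > 0` solves
`(M + artanh(½ tanh M)) · tanh M = −α·√(√3·S)`. -/
theorem robin_eigenvalue_strictMono_area (α : ℝ) (hα : α < 0)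
    (S₁ S₂ : ℝ) (hS₁ : 0 < S₁) (hS : S₁ < S₂)
    (M₁ M₂ : ℝ) (hM₁ : 0 < M₁) (hM₂ : 0 < M₂)
    (h₁ : (M₁ + artanh ((1 / 2) * Real.tanh M₁)) * Real.tanh M₁ =
      -α * Real.sqrt (Real.sqrt 3 * S₁))
    (h₂ : (M₂ + artanh ((1 / 2) * Real.tanh M₂)) * Real.tanh M₂ =
      -α * Real.sqrt (Real.sqrt 3 * S₂)) :
    M₁ < M₂ ∧ -4 * α ^ 2 / Real.tanh M₁ ^ 2 < -4 * α ^ 2 / Real.tanh M₂ ^ 2 := by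
  have h3 : (0:ℝ) < Real.sqrt 3 := Real.sqrt_pos.2 (by norm_num)
  have hrhs : -α * Real.sqrt (Real.sqrt 3 * S₁) < -α * Real.sqrt (Real.sqrt 3 * S₂) := by
    apply mul_lt_mul_of_pos_left _ (by linarith)
    exact Real.sqrt_lt_sqrt (by positivity) (by nlinarith)
  have hM : M₁ < M₂ := by
    by_contra h
    push_neg at h
    rcases eq_or_lt_of_le h with h | h
    · rw [h] at h₂; rw [h₂] at h₁; linarith
    · have := f_strictMono hM₂ h
      rw [h₁, h₂] at this
      linarith
  refine ⟨hM, ?_⟩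
  have hta : 0 < Real.tanh M₁ := tanh_pos_aux hM₁
  have htab : Real.tanh M₁ < Real.tanh M₂ := tanh_strictMono hM
  rw [div_lt_div_iff₀ (pow_pos hta 2) (pow_pos (hta.trans htab) 2)]
  nlinarith [mul_pos_of_neg_of_neg hα hα, mul_pos (sub_pos.2 htab) (add_pos hta (hta.trans htab))]
end

section
/- Let g(t) := t/(1−t²) + t/(2(1−t²/4)) − 4·artanh(t) − 4·artanh(t/2) for t ∈ (0,1). Then g(t) < 0 for every t with 0 < t ≤ √(9−√33)/2. -/
/-!
Both `artanh` terms are bounded below by the first two terms of their Taylor series,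
`artanh x ≥ x + x³/3` for `0 ≤ x < 1`, which gives `4 artanh t + 4 artanh (t/2) ≥ 6t + 3t³/2`.
With `s = t²`, the remaining rational inequality `t/(1−t²) + t/(2(1−t²/4)) < 6t + 3t³/2` is
equivalent to `s³ − s² − 14s + 12 > 0`. Since `s₀ = (9 − √33)/4` is a root of `2s² − 9s + 6`,
dividing the cubic by this quadratic leaves the remainder `3/2 − 5s/4`, which is positive
on `[0, s₀]`, where the quadratic is nonnegative.
-/

lemma two_mul_add_le_log_sub_log {x : ℝ} (h0 : 0 ≤ x) (h1 : x < 1) :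
    2 * x + 2 * x ^ 3 / 3 ≤ Real.log (1 + x) - Real.log (1 - x) := by
  have hsum := Real.hasSum_log_sub_log_of_abs_lt_one (abs_lt.mpr ⟨by linarith, h1⟩)
  have hle := sum_le_hasSum (Finset.range 2) (fun k _ => by positivity) hsum
  norm_num [Finset.sum_range_succ] at hle
  linarith

lemma add_pow_three_div_three_le_artanh {x : ℝ} (h0 : 0 ≤ x) (h1 : x < 1) :
    x + x ^ 3 / 3 ≤ artanh x := by
  rw [artanh, Real.log_div (by linarith) (by linarith)]
  linarith [two_mul_add_le_log_sub_log h0 h1]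

lemma five_lt_sqrt_33 : 5 < √33 := by
  rw [Real.lt_sqrt (by norm_num)]; norm_num

lemma cubic_pos_of_le {s : ℝ} (hs0 : 0 ≤ s) (hs : s ≤ (9 - √33) / 4) :
    0 < s ^ 3 - s ^ 2 - 14 * s + 12 := by
  have hquad : 0 ≤ 2 * s ^ 2 - 9 * s + 6 := by
    nlinarith [Real.sq_sqrt (show (0 : ℝ) ≤ 33 by norm_num), Real.sqrt_nonneg 33]
  have hdiv : s ^ 3 - s ^ 2 - 14 * s + 12
      = (s / 2 + 7 / 4) * (2 * s ^ 2 - 9 * s + 6) + (3 / 2 - 5 / 4 * s) := by ring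
  rw [hdiv]
  nlinarith [five_lt_sqrt_33]

lemma div_one_sub_sq_add_lt {t : ℝ} (ht0 : 0 < t) (hs : t ^ 2 ≤ (9 - √33) / 4) :
    t / (1 - t ^ 2) + t / (2 * (1 - t ^ 2 / 4)) < 6 * t + 3 / 2 * t ^ 3 := by
  have hs1 : t ^ 2 < 1 := by linarith [five_lt_sqrt_33]
  rw [div_add_div _ _ (by linarith) (by linarith), div_lt_iff₀ (by nlinarith)]
  nlinarith [mul_pos ht0 (cubic_pos_of_le (sq_nonneg t) hs)]

/-- The function `g(t) = t/(1−t²) + t/(2(1−t²/4)) − 4 artanh t − 4 artanh(t/2)` is negative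
for `0 < t ≤ √(9−√33)/2`. -/
theorem g_neg_of_le (t : ℝ) (ht0 : 0 < t) (ht : t ≤ Real.sqrt (9 - Real.sqrt 33) / 2) :
    t / (1 - t ^ 2) + t / (2 * (1 - t ^ 2 / 4)) - 4 * artanh t - 4 * artanh (t / 2) < 0 := by
  have hs : t ^ 2 ≤ (9 - √33) / 4 := by
    have hsqrt33 : √33 ≤ 9 := by rw [Real.sqrt_le_left (by norm_num)]; norm_num
    calc t ^ 2 ≤ (√(9 - √33) / 2) ^ 2 := pow_le_pow_left₀ ht0.le ht 2
      _ = (9 - √33) / 4 := by rw [div_pow, Real.sq_sqrt (by linarith)]; norm_num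
  have ht1 : t < 1 := by nlinarith [five_lt_sqrt_33]
  have hA := add_pow_three_div_three_le_artanh ht0.le ht1
  have hB := add_pow_three_div_three_le_artanh (x := t / 2) (by positivity) (by linarith)
  linarith [div_one_sub_sq_add_lt ht0 hs]
end

section
/- Let S > 0, α < 0 and K > 0 be such that |√(√3·S)·α/K| < 1 and K + artanh(√(√3·S)·α/K) + artanh(√(√3·S)·α/(2K)) = 0. Then K < 3 − α·√(√3·S), and consequently −4K²/(√3·S) > −4α² + 24α/√(√3·S) − 36/(√3·S). -/
theorem artanh_neg (x : ℝ) : artanh (-x) = -artanh x := by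
  have hinv : (1 + -x) / (1 - -x) = ((1 + x) / (1 - x))⁻¹ := by
    rw [inv_div]
    ring
  rw [artanh, artanh, hinv, Real.log_inv]
  ring

theorem artanh_le_div_one_sub {x : ℝ} (h₁ : -1 < x) (h₂ : x < 1) :
    artanh x ≤ x / (1 - x) := by
  have h₂' : 0 < 1 - x := sub_pos.2 h₂
  have hlog := Real.log_le_sub_one_of_pos (div_pos (by linarith : 0 < 1 + x) h₂')
  have hsub : (1 + x) / (1 - x) - 1 = 2 * (x / (1 - x)) := by
    field_simp
    ring
  rw [artanh]
  linarith

theorem artanh_add_artanh_half_mul_one_sub_lt_one {u : ℝ} (h₁ : -1 < u) (h₂ : u < 1) :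
    (artanh u + artanh (u / 2)) * (1 - u) < 1 := by
  have h₂' : 0 < 1 - u := sub_pos.2 h₂
  have hfull : artanh u * (1 - u) ≤ u := by
    calc artanh u * (1 - u) ≤ u / (1 - u) * (1 - u) := by
          gcongr
          exact artanh_le_div_one_sub h₁ h₂
      _ = u := div_mul_cancel₀ u h₂'.ne'
  have hhalf : artanh (u / 2) < 1 := by
    calc artanh (u / 2) ≤ u / 2 / (1 - u / 2) := artanh_le_div_one_sub (by linarith) (by linarith)
      _ < 1 := (div_lt_one (by linarith)).2 (by linarith)
  linarith [mul_lt_mul_of_pos_right hhalf h₂', add_mul (artanh u) (artanh (u / 2)) (1 - u)]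

theorem eigenvalue_lower_bound_general (S α K : ℝ) (hS : 0 < S) (hK : 0 < K)
    (habs : |Real.sqrt (Real.sqrt 3 * S) * α / K| < 1)
    (heq : K + artanh (Real.sqrt (Real.sqrt 3 * S) * α / K) +
      artanh (Real.sqrt (Real.sqrt 3 * S) * α / (2 * K)) = 0) :
    K < 3 - α * Real.sqrt (Real.sqrt 3 * S) ∧
    -4 * K ^ 2 / (Real.sqrt 3 * S) >
      -4 * α ^ 2 + 24 * α / Real.sqrt (Real.sqrt 3 * S) - 36 / (Real.sqrt 3 * S) := by
  set A := Real.sqrt (Real.sqrt 3 * S)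
  have hA2 : A ^ 2 = Real.sqrt 3 * S := Real.sq_sqrt (by positivity)
  have hA : 0 < A := Real.sqrt_pos.2 (by positivity)
  obtain ⟨u, hu⟩ : ∃ u, A * α / K = -u := ⟨-(A * α / K), (neg_neg _).symm⟩
  rw [hu, abs_neg, abs_lt] at habs
  have hK_eq : K = artanh u + artanh (u / 2) := by
    rw [show A * α / (2 * K) = -(u / 2) by rw [← neg_div, ← hu]; ring, hu,
      artanh_neg, artanh_neg] at heq
    linarith
  have hKu : K * (1 - u) < 1 :=
    hK_eq ▸ artanh_add_artanh_half_mul_one_sub_lt_one habs.1 habs.2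
  have huK : u * K = -(α * A) := by
    rw [div_eq_iff hK.ne'] at hu
    linarith
  have hK_lt : K < 3 - α * A := by linarith [mul_one_sub K u]
  refine ⟨hK_lt, ?_⟩
  rw [← hA2]
  calc -4 * α ^ 2 + 24 * α / A - 36 / A ^ 2 = -4 * (3 - α * A) ^ 2 / A ^ 2 := by
        field_simp
        ring
    _ < -4 * K ^ 2 / A ^ 2 := by
        have hsq : K ^ 2 < (3 - α * A) ^ 2 := pow_lt_pow_left₀ hK_lt hK.le two_ne_zero
        exact div_lt_div_of_pos_right (by linarith) (by positivity)

/-- A lower bound on the lowest Robin eigenvalue `λ₀ = −4K²/(√3·S)` of the equilateral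
triangle: `K < 3 − α·√(√3·S)`, whence `λ₀ > −4α² + 24α/√(√3·S) − 36/(√3·S)`. -/
theorem eigenvalue_lower_bound (S α K : ℝ) (hS : 0 < S) (hα : α < 0) (hK : 0 < K)
    (habs : |Real.sqrt (Real.sqrt 3 * S) * α / K| < 1)
    (heq : K + artanh (Real.sqrt (Real.sqrt 3 * S) * α / K) +
      artanh (Real.sqrt (Real.sqrt 3 * S) * α / (2 * K)) = 0) :
    K < 3 - α * Real.sqrt (Real.sqrt 3 * S) ∧
    -4 * K ^ 2 / (Real.sqrt 3 * S) >
      -4 * α ^ 2 + 24 * α / Real.sqrt (Real.sqrt 3 * S) - 36 / (Real.sqrt 3 * S) :=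
  eigenvalue_lower_bound_general S α K hS hK habs heq
end

section
/- Let S > 0, L, M ∈ ℝ, set K := M − L and β := 1/√(√3·S), and define u₀ : ℝ² → ℝ by u₀(x,y) := cosh(L + 2Kβy) + 2·cosh(K(1−βy) + L)·cosh(√3·Kβx). Then u₀ is smooth and satisfies Δu₀ = (4K²/(√3·S))·u₀ everywhere on ℝ², where Δu₀ = ∂²u₀/∂x² + ∂²u₀/∂y². In other words, u₀ satisfies −Δu₀ = λ₀·u₀ with λ₀ := −4(M−L)²/(√3·S). -/
/-- The ground state `u₀` of the Robin Laplacian on the equilateral triangle satisfies the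
eigenvalue equation `−Δu₀ = λ₀·u₀` with `λ₀ = −4(M−L)²/(√3·S)`, on all of `ℝ²`. -/
theorem ground_state_eigen_equation (S L M : ℝ) (hS : 0 < S)
    (K β : ℝ) (hK : K = M - L) (hβ : β = 1 / Real.sqrt (Real.sqrt 3 * S))
    (u₀ : ℝ → ℝ → ℝ)
    (hu : ∀ x y : ℝ, u₀ x y = Real.cosh (L + 2 * K * β * y) +
      2 * Real.cosh (K * (1 - β * y) + L) * Real.cosh (Real.sqrt 3 * K * β * x)) :
    ContDiff ℝ (⊤ : ℕ∞) (fun p : ℝ × ℝ => u₀ p.1 p.2) ∧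
    ∀ x y : ℝ,
      deriv (deriv (fun s : ℝ => u₀ s y)) x + deriv (deriv (fun t : ℝ => u₀ x t)) y =
        (4 * K ^ 2 / (Real.sqrt 3 * S)) * u₀ x y := by
  have h3S : (0:ℝ) < Real.sqrt 3 * S :=
    mul_pos (Real.sqrt_pos.2 (by norm_num)) hS
  have hβ2 : β ^ 2 = 1 / (Real.sqrt 3 * S) := by
    rw [hβ, div_pow, one_pow, Real.sq_sqrt h3S.le]
  have hs3 : Real.sqrt 3 ^ 2 = 3 := Real.sq_sqrt (by norm_num)
  constructor
  · have : (fun p : ℝ × ℝ => u₀ p.1 p.2) =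
        (fun p : ℝ × ℝ => Real.cosh (L + 2 * K * β * p.2) +
          2 * Real.cosh (K * (1 - β * p.2) + L) * Real.cosh (Real.sqrt 3 * K * β * p.1)) := by
      funext p; exact hu p.1 p.2
    rw [this]
    have hc : ∀ (a b : ℝ) (f : ℝ × ℝ → ℝ), ContDiff ℝ (⊤ : ℕ∞) f →
        ContDiff ℝ (⊤ : ℕ∞) fun p : ℝ × ℝ => Real.cosh (a + b * f p) := fun a b f hf =>
      Real.contDiff_cosh.comp (contDiff_const.add (contDiff_const.mul hf))
    have h1 := hc L (2 * K * β) (fun p => p.2) contDiff_snd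
    have h2 : ContDiff ℝ (⊤ : ℕ∞) fun p : ℝ × ℝ => Real.cosh (K * (1 - β * p.2) + L) := by
      have := hc (K + L) (-(K * β)) (fun p => p.2) contDiff_snd
      convert this using 2 with p
      ring
    have h3 : ContDiff ℝ (⊤ : ℕ∞) fun p : ℝ × ℝ => Real.cosh (Real.sqrt 3 * K * β * p.1) := by
      have := hc 0 (Real.sqrt 3 * K * β) (fun p => p.1) contDiff_fst
      convert this using 2 with p
      ring
    exact h1.add ((contDiff_const.mul h2).mul h3)
  · intro x y
    -- x-direction
    have hdx1 : ∀ s : ℝ, HasDerivAt (fun s : ℝ => u₀ s y)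
        (2 * Real.cosh (K * (1 - β * y) + L) *
          (Real.sinh (Real.sqrt 3 * K * β * s) * (Real.sqrt 3 * K * β))) s := by
      intro s
      have hin : HasDerivAt (fun s : ℝ => Real.sqrt 3 * K * β * s) (Real.sqrt 3 * K * β) s := by
        simpa using (hasDerivAt_id s).const_mul (Real.sqrt 3 * K * β)
      have := ((hin.cosh.const_mul
        (2 * Real.cosh (K * (1 - β * y) + L))).const_add (Real.cosh (L + 2 * K * β * y)))
      refine this.congr_of_eventuallyEq ?_
      filter_upwards with s using (hu s y)
    have hdx : deriv (fun s : ℝ => u₀ s y) = fun s =>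
        2 * Real.cosh (K * (1 - β * y) + L) *
          (Real.sinh (Real.sqrt 3 * K * β * s) * (Real.sqrt 3 * K * β)) := by
      funext s; exact (hdx1 s).deriv
    have hdx2 : deriv (deriv (fun s : ℝ => u₀ s y)) x =
        2 * Real.cosh (K * (1 - β * y) + L) *
          (Real.cosh (Real.sqrt 3 * K * β * x) * (Real.sqrt 3 * K * β) * (Real.sqrt 3 * K * β)) := by
      rw [hdx]
      have hin : HasDerivAt (fun s : ℝ => Real.sqrt 3 * K * β * s) (Real.sqrt 3 * K * β) x := by
        simpa using (hasDerivAt_id x).const_mul (Real.sqrt 3 * K * β)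
      exact (((hin.sinh.mul_const (Real.sqrt 3 * K * β)).const_mul
        (2 * Real.cosh (K * (1 - β * y) + L)))).deriv
    -- y-direction
    have hin1 : ∀ t : ℝ, HasDerivAt (fun t : ℝ => L + 2 * K * β * t) (2 * K * β) t := by
      intro t
      simpa using ((hasDerivAt_id t).const_mul (2 * K * β)).const_add L
    have hin2 : ∀ t : ℝ, HasDerivAt (fun t : ℝ => K * (1 - β * t) + L) (K * (-β)) t := by
      intro t
      have h0 : HasDerivAt (fun t : ℝ => β * t) β t := by
        simpa using (hasDerivAt_id t).const_mul β
      simpa using (((h0.const_sub 1).const_mul K).add_const L)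
    have hdy1 : ∀ t : ℝ, HasDerivAt (fun t : ℝ => u₀ x t)
        (Real.sinh (L + 2 * K * β * t) * (2 * K * β) +
          2 * (Real.sinh (K * (1 - β * t) + L) * (K * (-β))) *
            Real.cosh (Real.sqrt 3 * K * β * x)) t := by
      intro t
      have := ((hin1 t).cosh).add
        ((((hin2 t).cosh.const_mul 2)).mul_const (Real.cosh (Real.sqrt 3 * K * β * x)))
      refine this.congr_of_eventuallyEq ?_
      filter_upwards with t using (hu x t)
    have hdy : deriv (fun t : ℝ => u₀ x t) = fun t =>
        Real.sinh (L + 2 * K * β * t) * (2 * K * β) +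
          2 * (Real.sinh (K * (1 - β * t) + L) * (K * (-β))) *
            Real.cosh (Real.sqrt 3 * K * β * x) := by
      funext t; exact (hdy1 t).deriv
    have hdy2 : deriv (deriv (fun t : ℝ => u₀ x t)) y =
        Real.cosh (L + 2 * K * β * y) * (2 * K * β) * (2 * K * β) +
          2 * (Real.cosh (K * (1 - β * y) + L) * (K * (-β)) * (K * (-β))) *
            Real.cosh (Real.sqrt 3 * K * β * x) := by
      rw [hdy]
      have h1 := ((hin1 y).sinh).mul_const (2 * K * β)
      have h2 := ((((hin2 y).sinh.mul_const (K * (-β))).const_mul 2)).mul_const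
        (Real.cosh (Real.sqrt 3 * K * β * x))
      have := h1.add h2
      exact this.deriv
    rw [hdx2, hdy2, hu x y]
    have h4 : 4 * K ^ 2 / (Real.sqrt 3 * S) = 4 * K ^ 2 * β ^ 2 := by
      rw [hβ2]; ring
    rw [h4]
    set cA := Real.cosh (K * (1 - β * y) + L)
    set cB := Real.cosh (Real.sqrt 3 * K * β * x)
    set cC := Real.cosh (L + 2 * K * β * y)
    linear_combination (2 * cA * cB * K ^ 2 * β ^ 2) * hs3
end

section
/- Let α < 0, S > 0 and L, M ∈ ℝ satisfy the system 2(L−M)·tanh(L) = −α·√(√3·S) and (M−L)·tanh(M) = −α·√(√3·S). Set K := M − L, β := 1/√(√3·S), and define u₀ : ℝ² → ℝ by u₀(x,y) := cosh(L + 2Kβy) + 2·cosh(K(1−βy) + L)·cosh(√3·Kβx). Then u₀ satisfies the Robin boundary condition on the bottom edge {y = 0}: for every x ∈ ℝ, ∂₂u₀(x,0) = α·u₀(x,0), where ∂₂ denotes the partial derivative with respect to the second variable. (Since the outward unit normal of the triangle along this edge is (0,−1), this is exactly ∂u₀/∂n + α·u₀ = 0 there.) -/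
/-!
On `y = 0` the first summand of `u₀` has `y`-derivative `2Kβ sinh L` and the second one
`-2Kβ sinh M cosh(√3Kβx)`, while `u₀(x,0) = cosh L + 2 cosh M cosh(√3Kβx)`. Multiplying the two
transcendental equations by `β cosh` turns them into `2Kβ sinh L = α cosh L` and
`-Kβ sinh M = α cosh M`, which match the two parts term by term.
-/

open Real

lemma mul_sinh_eq_of_mul_tanh_eq {k a t : ℝ} (h : k * tanh t = a) :
    k * sinh t = a * cosh t := by
  rw [← h, tanh_eq_sinh_div_cosh]
  field_simp [(cosh_pos t).ne']

lemma deriv_cosh_add_two_mul_cosh_at_zero (L K β c : ℝ) :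
    deriv (fun y : ℝ => cosh (L + 2 * K * β * y) + 2 * cosh (K * (1 - β * y) + L) * c) 0 =
      2 * K * β * sinh L - 2 * K * β * sinh (K + L) * c := by
  have hfirst : HasDerivAt (fun y : ℝ => L + 2 * K * β * y) (2 * K * β) 0 := by
    simpa using ((hasDerivAt_id (0 : ℝ)).const_mul (2 * K * β)).const_add L
  have hsecond : HasDerivAt (fun y : ℝ => K * (1 - β * y) + L) (-(K * β)) 0 := by
    simpa using (((hasDerivAt_id (0 : ℝ)).const_mul β).const_sub 1).const_mul K |>.add_const L
  have h := hfirst.cosh.fun_add ((hsecond.cosh.const_mul 2).mul_const c)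
  rw [h.deriv]
  simp only [mul_zero, add_zero, sub_zero, mul_one]
  ring

theorem ground_state_robin_bc_bottom_general (α S L M : ℝ) (hS : 0 < S)
    (hLM1 : 2 * (L - M) * Real.tanh L = -α * Real.sqrt (Real.sqrt 3 * S))
    (hLM2 : (M - L) * Real.tanh M = -α * Real.sqrt (Real.sqrt 3 * S))
    (K β : ℝ) (hK : K = M - L) (hβ : β = 1 / Real.sqrt (Real.sqrt 3 * S))
    (u₀ : ℝ → ℝ → ℝ)
    (hu : ∀ x y : ℝ, u₀ x y = Real.cosh (L + 2 * K * β * y) +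
      2 * Real.cosh (K * (1 - β * y) + L) * Real.cosh (Real.sqrt 3 * K * β * x)) :
    ∀ x : ℝ, deriv (fun t : ℝ => u₀ x t) 0 = α * u₀ x 0 := by
  intro x
  have hβs : β * sqrt (sqrt 3 * S) = 1 := by
    rw [hβ, one_div, inv_mul_cancel₀ (sqrt_pos.2 (by positivity)).ne']
  have hrobinL := mul_sinh_eq_of_mul_tanh_eq hLM1
  have hrobinM := mul_sinh_eq_of_mul_tanh_eq hLM2
  have hKL : K + L = M := by rw [hK]; ring
  simp only [hu]
  rw [deriv_cosh_add_two_mul_cosh_at_zero]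
  simp only [mul_zero, add_zero, sub_zero, mul_one, hKL]
  set c := cosh (sqrt 3 * K * β * x)
  rw [hK]
  linear_combination (-β) * hrobinL - 2 * β * c * hrobinM +
    α * (cosh L + 2 * cosh M * c) * hβs

/-- The ground state `u₀` of the Robin Laplacian on the equilateral triangle satisfies the
Robin boundary condition `∂u₀/∂n + α·u₀ = 0` on the bottom edge `{y = 0}`, i.e.
`∂₂u₀(x,0) = α·u₀(x,0)` for every `x`. -/
theorem ground_state_robin_bc_bottom (α S L M : ℝ) (hα : α < 0) (hS : 0 < S)
    (hLM1 : 2 * (L - M) * Real.tanh L = -α * Real.sqrt (Real.sqrt 3 * S))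
    (hLM2 : (M - L) * Real.tanh M = -α * Real.sqrt (Real.sqrt 3 * S))
    (K β : ℝ) (hK : K = M - L) (hβ : β = 1 / Real.sqrt (Real.sqrt 3 * S))
    (u₀ : ℝ → ℝ → ℝ)
    (hu : ∀ x y : ℝ, u₀ x y = Real.cosh (L + 2 * K * β * y) +
      2 * Real.cosh (K * (1 - β * y) + L) * Real.cosh (Real.sqrt 3 * K * β * x)) :
    ∀ x : ℝ, deriv (fun t : ℝ => u₀ x t) 0 = α * u₀ x 0 :=
  ground_state_robin_bc_bottom_general α S L M hS hLM1 hLM2 K β hK hβ u₀ hu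
end

section
/- Let α < 0, S > 0 and L, M ∈ ℝ satisfy the system 2(L−M)·tanh(L) = −α·√(√3·S) and (M−L)·tanh(M) = −α·√(√3·S). Set K := M − L, β := 1/√(√3·S), c₀ := √(S/√3), and define u₀ : ℝ² → ℝ by u₀(x,y) := cosh(L + 2Kβy) + 2·cosh(K(1−βy) + L)·cosh(√3·Kβx). Then u₀ satisfies the Robin boundary condition along the right slanted edge of the equilateral triangle, i.e. for every x ∈ ℝ, (√3/2)·∂₁u₀(x, √3(c₀ − x)) + (1/2)·∂₂u₀(x, √3(c₀ − x)) + α·u₀(x, √3(c₀ − x)) = 0, where ∂₁, ∂₂ denote the partial derivatives with respect to the first and second variables. (The vector (√3/2, 1/2) is the outward unit normal of the triangle along this edge, so this is exactly ∂u₀/∂n + α·u₀ = 0 there.) -/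
/-!
By the product-to-sum formula, `u₀` is a sum of three `cosh` plane waves with wave vectors
`(0, 2k)` and `(±√3 k, -k)`, where `k = Kβ`; their components along the normal `(√3/2, 1/2)` are
`k`, `k` and `-2k`. On the slanted edge the three phases are `M + d`, `M - d` and `L`, so the Robin
expression equals `2 cosh d · (k sinh M + α cosh M) + (-2k sinh L + α cosh L)`. Multiplying the
transcendental system by `β = 1/√(√3 S)` and writing `tanh = sinh / cosh` makes both brackets vanish.
-/

open Real

theorem sinh_add_add_sinh_sub (x y : ℝ) : sinh (x + y) + sinh (x - y) = 2 * sinh x * cosh y := by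
  rw [sinh_add, sinh_sub]; ring

theorem cosh_add_add_cosh_sub (x y : ℝ) : cosh (x + y) + cosh (x - y) = 2 * cosh x * cosh y := by
  rw [cosh_add, cosh_sub]; ring

theorem mul_sinh_add_mul_cosh_eq_zero_of_mul_tanh_eq {c α z : ℝ} (h : c * tanh z = -α) :
    c * sinh z + α * cosh z = 0 := by
  rw [tanh_eq_sinh_div_cosh, mul_div_assoc', div_eq_iff (cosh_pos z).ne'] at h
  linarith

noncomputable def triangleMode (L K k x y : ℝ) : ℝ :=
  cosh (L + 2 * k * y) + cosh (L + K + √3 * k * x - k * y) + cosh (L + K - √3 * k * x - k * y)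

namespace triangleMode

variable (L K k : ℝ)

theorem hasDerivAt_fst (x y : ℝ) :
    HasDerivAt (fun s => triangleMode L K k s y)
      (√3 * k * (sinh (L + K + √3 * k * x - k * y) - sinh (L + K - √3 * k * x - k * y))) x := by
  have hlin := (hasDerivAt_id' x).const_mul (√3 * k)
  have hplus := ((hlin.const_add (L + K)).sub_const (k * y)).cosh
  have hminus := ((hlin.const_sub (L + K)).sub_const (k * y)).cosh
  refine ((hplus.const_add (cosh (L + 2 * k * y))).add hminus).congr_deriv ?_
  ring

theorem hasDerivAt_snd (x y : ℝ) :
    HasDerivAt (fun t => triangleMode L K k x t)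
      (2 * k * sinh (L + 2 * k * y) - k * sinh (L + K + √3 * k * x - k * y)
        - k * sinh (L + K - √3 * k * x - k * y)) y := by
  have hlin := (hasDerivAt_id' y).const_mul k
  have htop := ((hasDerivAt_id' y).const_mul (2 * k)).const_add L |>.cosh
  have hplus := (hlin.const_sub (L + K + √3 * k * x)).cosh
  have hminus := (hlin.const_sub (L + K - √3 * k * x)).cosh
  refine ((htop.add hplus).add hminus).congr_deriv ?_
  ring

theorem normal_deriv_slanted (x y : ℝ) :
    √3 / 2 * deriv (fun s => triangleMode L K k s y) x
        + 1 / 2 * deriv (fun t => triangleMode L K k x t) y =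
      k * sinh (L + 2 * k * y) + k * sinh (L + K + √3 * k * x - k * y)
        - 2 * k * sinh (L + K - √3 * k * x - k * y) := by
  rw [(hasDerivAt_fst L K k x y).deriv, (hasDerivAt_snd L K k x y).deriv]
  linear_combination (k / 2 * (sinh (L + K + √3 * k * x - k * y)
    - sinh (L + K - √3 * k * x - k * y))) * mul_self_sqrt (zero_le_three : (0 : ℝ) ≤ 3)

theorem robin_slanted {α : ℝ} (hM : k * sinh (L + K) + α * cosh (L + K) = 0)
    (hL : -(2 * k) * sinh L + α * cosh L = 0) {x y : ℝ} (hedge : k * y = K - √3 * k * x) :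
    √3 / 2 * deriv (fun s => triangleMode L K k s y) x
        + 1 / 2 * deriv (fun t => triangleMode L K k x t) y + α * triangleMode L K k x y = 0 := by
  set d := K - 2 * √3 * k * x
  have hfirst : L + 2 * k * y = L + K + d := by linear_combination 2 * hedge
  have hsecond : L + K + √3 * k * x - k * y = L + K - d := by linear_combination -hedge
  have hthird : L + K - √3 * k * x - k * y = L := by linear_combination -hedge
  rw [normal_deriv_slanted, triangleMode, hfirst, hsecond, hthird]
  linear_combination k * sinh_add_add_sinh_sub (L + K) d + α * cosh_add_add_cosh_sub (L + K) d
    + 2 * cosh d * hM + hL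

end triangleMode

theorem ground_state_robin_bc_slanted_general (α S L M : ℝ) (hS : 0 < S)
    (hLM1 : 2 * (L - M) * Real.tanh L = -α * Real.sqrt (Real.sqrt 3 * S))
    (hLM2 : (M - L) * Real.tanh M = -α * Real.sqrt (Real.sqrt 3 * S))
    (K β c₀ : ℝ) (hK : K = M - L) (hβ : β = 1 / Real.sqrt (Real.sqrt 3 * S))
    (hc₀ : c₀ = Real.sqrt (S / Real.sqrt 3))
    (u₀ : ℝ → ℝ → ℝ)
    (hu : ∀ x y : ℝ, u₀ x y = Real.cosh (L + 2 * K * β * y) +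
      2 * Real.cosh (K * (1 - β * y) + L) * Real.cosh (Real.sqrt 3 * K * β * x)) :
    ∀ x : ℝ,
      (Real.sqrt 3 / 2) * deriv (fun s : ℝ => u₀ s (Real.sqrt 3 * (c₀ - x))) x +
        (1 / 2) * deriv (fun t : ℝ => u₀ x t) (Real.sqrt 3 * (c₀ - x)) +
        α * u₀ x (Real.sqrt 3 * (c₀ - x)) = 0 := by
  intro x
  have hβ_mul : β * √(√3 * S) = 1 := by
    rw [hβ, one_div_mul_cancel (sqrt_pos.mpr (by positivity)).ne']
  have hc₀β : √3 * c₀ * β = 1 := by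
    have h3 : 3 * (S / √3) = √3 * S := by
      field_simp; rw [sq_sqrt zero_le_three]
    rw [hc₀, ← sqrt_mul zero_le_three, h3, mul_comm, hβ_mul]
  have hu₀ : u₀ = triangleMode L K (K * β) := by
    ext x y
    rw [hu, ← cosh_add_add_cosh_sub, triangleMode]
    ring_nf
  have hM : K * β * sinh (L + K) + α * cosh (L + K) = 0 :=
    mul_sinh_add_mul_cosh_eq_zero_of_mul_tanh_eq <| by
      rw [hK, add_sub_cancel]; linear_combination β * hLM2 - α * hβ_mul
  have hL : -(2 * (K * β)) * sinh L + α * cosh L = 0 :=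
    mul_sinh_add_mul_cosh_eq_zero_of_mul_tanh_eq <| by
      rw [hK]; linear_combination β * hLM1 - α * hβ_mul
  rw [hu₀]
  exact triangleMode.robin_slanted L K (K * β) hM hL (by linear_combination K * hc₀β)

/-- The ground state `u₀` of the Robin Laplacian on the equilateral triangle satisfies the
Robin boundary condition `∂u₀/∂n + α·u₀ = 0` along the right slanted edge
`y = √3(c₀ − x)`, whose outward unit normal is `(√3/2, 1/2)`. -/
theorem ground_state_robin_bc_slanted (α S L M : ℝ) (hα : α < 0) (hS : 0 < S)
    (hLM1 : 2 * (L - M) * Real.tanh L = -α * Real.sqrt (Real.sqrt 3 * S))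
    (hLM2 : (M - L) * Real.tanh M = -α * Real.sqrt (Real.sqrt 3 * S))
    (K β c₀ : ℝ) (hK : K = M - L) (hβ : β = 1 / Real.sqrt (Real.sqrt 3 * S))
    (hc₀ : c₀ = Real.sqrt (S / Real.sqrt 3))
    (u₀ : ℝ → ℝ → ℝ)
    (hu : ∀ x y : ℝ, u₀ x y = Real.cosh (L + 2 * K * β * y) +
      2 * Real.cosh (K * (1 - β * y) + L) * Real.cosh (Real.sqrt 3 * K * β * x)) :
    ∀ x : ℝ,
      (Real.sqrt 3 / 2) * deriv (fun s : ℝ => u₀ s (Real.sqrt 3 * (c₀ - x))) x +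
        (1 / 2) * deriv (fun t : ℝ => u₀ x t) (Real.sqrt 3 * (c₀ - x)) +
        α * u₀ x (Real.sqrt 3 * (c₀ - x)) = 0 :=
  ground_state_robin_bc_slanted_general α S L M hS hLM1 hLM2 K β c₀ hK hβ hc₀ u₀ hu
end

section
/- For all real numbers K and M, 12K² · ∫_0^1 ∫_{(y−1)/√3}^{(1−y)/√3} cosh²(Ky + M)·sinh²(√3·Kx) dx dy = (√3/8)·( −4 − 8K² + 4·cosh(2K) + cosh(2K−2M) + 4·cosh(2M) − 5·cosh(2K+2M) + 8K·sinh(2M) + 4K·sinh(2K+2M) ). -/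
/-!
Since `sinh² t = (cosh 2t - 1) / 2`, the inner integral over the symmetric interval
`[-(1 - y)/√3, (1 - y)/√3]` is elementary, and leaves `cosh² (K y + M)` times
`(sinh (2K(1 - y)) / (2K) - (1 - y)) / √3`. Writing `cosh²` through `cosh 2t` and the product
`cosh · sinh` as a sum of two `sinh`s turns the outer integrand into hyperbolic functions of
affine arguments plus `(1 - y) cosh (2Ky + 2M)`, for which a primitive is written down
explicitly. For `K = 0` both sides vanish.
-/

open Real intervalIntegral

lemma sinh_sq_eq_cosh_two_mul (x : ℝ) : sinh x ^ 2 = (cosh (2 * x) - 1) / 2 := by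
  rw [cosh_two_mul, cosh_sq]; ring

lemma cosh_sq_eq_cosh_two_mul (x : ℝ) : cosh x ^ 2 = (cosh (2 * x) + 1) / 2 := by
  rw [cosh_two_mul, cosh_sq]; ring

lemma two_mul_cosh_mul_sinh (a b : ℝ) : 2 * cosh a * sinh b = sinh (b + a) + sinh (b - a) := by
  rw [sinh_add, sinh_sub]; ring

lemma integral_sinh_sq_neg_self {c : ℝ} (hc : c ≠ 0) (a : ℝ) :
    ∫ x in -a..a, sinh (c * x) ^ 2 = sinh (2 * c * a) / (2 * c) - a := by
  have hF (x : ℝ) :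
      HasDerivAt (fun x => sinh (2 * c * x) / (4 * c) - x / 2) (sinh (c * x) ^ 2) x := by
    refine ((((hasDerivAt_id x).const_mul (2 * c)).sinh.div_const (4 * c)).sub
      ((hasDerivAt_id x).div_const 2)).congr_deriv ?_
    rw [sinh_sq_eq_cosh_two_mul, id, mul_assoc]
    field_simp
    ring
  rw [integral_eq_sub_of_hasDerivAt (fun x _ => hF x)
    ((by fun_prop : Continuous _).intervalIntegrable _ _), mul_neg, sinh_neg]
  field_simp
  ring

section

variable (K M : ℝ)

lemma cosh_sq_mul_sinh_div_sub_eq (y : ℝ) :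
    cosh (K * y + M) ^ 2 * (sinh (2 * K * (1 - y)) / (2 * K) - (1 - y)) =
      (2 * sinh (2 * K * (1 - y)) + sinh (2 * K + 2 * M) + sinh (2 * K - 2 * M - 4 * K * y))
        / (8 * K) - (1 - y) * (cosh (2 * K * y + 2 * M) + 1) / 2 := by
  have h := two_mul_cosh_mul_sinh (2 * K * y + 2 * M) (2 * K * (1 - y))
  rw [show 2 * K * (1 - y) + (2 * K * y + 2 * M) = 2 * K + 2 * M by ring,
    show 2 * K * (1 - y) - (2 * K * y + 2 * M) = 2 * K - 2 * M - 4 * K * y by ring] at h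
  rw [cosh_sq_eq_cosh_two_mul, show 2 * (K * y + M) = 2 * K * y + 2 * M by ring]
  linear_combination h / (8 * K)

lemma hasDerivAt_outer_primitive (hK : K ≠ 0) (y : ℝ) :
    HasDerivAt (fun y => -cosh (2 * K * (1 - y)) / (8 * K ^ 2) + y * sinh (2 * K + 2 * M) / (8 * K)
        - cosh (2 * K - 2 * M - 4 * K * y) / (32 * K ^ 2) + (1 - y) ^ 2 / 4
        - (1 - y) * sinh (2 * K * y + 2 * M) / (4 * K) - cosh (2 * K * y + 2 * M) / (8 * K ^ 2))
      (cosh (K * y + M) ^ 2 * (sinh (2 * K * (1 - y)) / (2 * K) - (1 - y))) y := by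
  have h1 := (hasDerivAt_id y).const_sub 1
  have hB := h1.const_mul (2 * K)
  have hC := ((hasDerivAt_id y).const_mul (4 * K)).const_sub (2 * K - 2 * M)
  have hU := ((hasDerivAt_id y).const_mul (2 * K)).add_const (2 * M)
  refine ((((((hB.cosh.neg.div_const (8 * K ^ 2)).add
    (((hasDerivAt_id y).mul_const (sinh (2 * K + 2 * M))).div_const (8 * K))).sub
    (hC.cosh.div_const (32 * K ^ 2))).add ((h1.pow 2).div_const 4)).sub
    ((h1.mul hU.sinh).div_const (4 * K))).sub (hU.cosh.div_const (8 * K ^ 2))).congr_deriv ?_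
  rw [cosh_sq_mul_sinh_div_sub_eq]
  simp only [id]
  field_simp
  ring

lemma integral_cosh_sq_mul_sinh_div_sub (hK : K ≠ 0) :
    ∫ y in (0 : ℝ)..1, cosh (K * y + M) ^ 2 * (sinh (2 * K * (1 - y)) / (2 * K) - (1 - y)) =
      (-4 - 8 * K ^ 2 + 4 * cosh (2 * K) + cosh (2 * K - 2 * M) + 4 * cosh (2 * M)
        - 5 * cosh (2 * K + 2 * M) + 8 * K * sinh (2 * M) + 4 * K * sinh (2 * K + 2 * M))
        / (32 * K ^ 2) := by
  rw [integral_eq_sub_of_hasDerivAt (fun y _ => hasDerivAt_outer_primitive K M hK y)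
    ((by fun_prop : Continuous _).intervalIntegrable _ _)]
  rw [show 2 * K - 2 * M - 4 * K * 1 = -(2 * K + 2 * M) by ring, cosh_neg]
  simp only [mul_one, mul_zero, zero_add, sub_zero, sub_self, cosh_zero]
  field_simp
  ring

end

/-- Explicit value of the squared `L²`-norm of `∂₁u₀` over the equilateral triangle of
area `1/√3` with vertices `(±1/√3, 0)` and `(0,1)`. -/
theorem norm_sq_partial_ground_state (K M : ℝ) :
    12 * K ^ 2 *
        ∫ y in (0 : ℝ)..1,
          ∫ x in ((y - 1) / Real.sqrt 3)..((1 - y) / Real.sqrt 3),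
            Real.cosh (K * y + M) ^ 2 * Real.sinh (Real.sqrt 3 * K * x) ^ 2 =
      (Real.sqrt 3 / 8) *
        (-4 - 8 * K ^ 2 + 4 * Real.cosh (2 * K) + Real.cosh (2 * K - 2 * M) +
          4 * Real.cosh (2 * M) - 5 * Real.cosh (2 * K + 2 * M) +
          8 * K * Real.sinh (2 * M) + 4 * K * Real.sinh (2 * K + 2 * M)) := by
  rcases eq_or_ne K 0 with rfl | hK
  · simp only [mul_zero, zero_sub, zero_add, cosh_neg, cosh_zero]
    ring
  have hs : √3 ≠ 0 := by positivity
  have hinner (y : ℝ) :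
      ∫ x in (y - 1) / √3..(1 - y) / √3, cosh (K * y + M) ^ 2 * sinh (√3 * K * x) ^ 2 =
        cosh (K * y + M) ^ 2 * (sinh (2 * K * (1 - y)) / (2 * K) - (1 - y)) / √3 := by
    rw [integral_const_mul, show (y - 1) / √3 = -((1 - y) / √3) by ring,
      integral_sinh_sq_neg_self (mul_ne_zero hs hK)]
    field_simp
  simp_rw [hinner, integral_div, integral_cosh_sq_mul_sinh_div_sub K M hK]
  field_simp
  rw [sq_sqrt zero_le_three]
  ring
end
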